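/- Let (X,T) be a topological dynamical system and μ ∈ M_T(X). Then μ is ergodic if and only if V^log_T(x) = {μ} for μ-almost every x ∈ X. -/

import Mathlib

/-!
Logarithmic averages are weighted averages of Cesàro averages (Abel summation), so they converge
wherever the Cesàro averages do. If `μ` is ergodic, Birkhoff's theorem makes the Cesàro averages of
every continuous `φ` converge `μ`-a.e. to `∫ φ dμ`; a countable dense family of `φ` and the
equicontinuity of the averaging functionals give this simultaneously for all `φ`, hence
`V^log_T(x) = {μ}`. Conversely, Birkhoff's theorem alone gives a.e. convergence of the Cesàro
averages to a `T`-invariant limit, and `μ ∈ V^log_T(x)` identifies this limit with `∫ φ dμ`.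
Integrating over an invariant set `B` then yields `μ|_B = μ(B) μ`, so `μ(B) μ(Bᶜ) = 0`.
Birkhoff's theorem itself comes from the maximal ergodic theorem: the invariant set where the
averages oscillate across rationals `a < b` has measure zero.
-/

open Filter MeasureTheory Topology

/-- The `n`-th harmonic number `H_n = ∑_{k=1}^n 1/k` as a real number. -/
noncomputable def H (n : ℕ) : ℝ := ∑ k ∈ Finset.range n, (1 : ℝ) / (k + 1)

/-- A Borel probability measure `μ` is `T`-invariant if `μ(T⁻¹B) = μ(B)` for every Borel set. -/
def IsInvariantMeasure {X : Type*} [MetricSpace X] [MeasurableSpace X]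
    (T : X → X) (μ : ProbabilityMeasure X) : Prop :=
  ∀ B : Set X, MeasurableSet B → μ (T ⁻¹' B) = μ B

/-- `V^log_T(x)`: all weak* limits of the logarithmic empirical measures
`(1/H_{n_i}) ∑_{k=1}^{n_i} (1/k) δ_{T^{k-1}x}` along strictly increasing sequences `n_i → ∞`. -/
def VTlog {X : Type*} [MetricSpace X] [MeasurableSpace X] (T : X → X) (x : X) :
    Set (ProbabilityMeasure X) :=
  {μ | ∃ n : ℕ → ℕ, StrictMono n ∧ ∀ f : C(X, ℝ),
    Tendsto (fun i : ℕ =>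
        (1 / H (n i)) * ∑ k ∈ Finset.range (n i), (1 / (k + 1 : ℝ)) * f (T^[k] x))
      atTop (𝓝 (∫ y, f y ∂(μ : Measure X)))}

/-- `Ṽ^log_T(x)`: all weak* limits of the window logarithmic empirical measures
`(1/H_{n_i-m_i}) ∑_{k=m_i+1}^{n_i} (1/(k-m_i)) δ_{T^{k-1}x}` with `n_i - m_i → ∞`. -/
def VTtildeLog {X : Type*} [MetricSpace X] [MeasurableSpace X] (T : X → X) (x : X) :
    Set (ProbabilityMeasure X) :=
  {μ | ∃ m n : ℕ → ℕ, (∀ i, m i < n i) ∧ Tendsto (fun i => n i - m i) atTop atTop ∧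
    ∀ f : C(X, ℝ),
      Tendsto (fun i : ℕ => (1 / H (n i - m i)) *
          ∑ j ∈ Finset.range (n i - m i), (1 / (j + 1 : ℝ)) * f (T^[m i + j] x))
        atTop (𝓝 (∫ y, f y ∂(μ : Measure X)))}

/-- A `T`-invariant Borel probability measure `μ` is ergodic if every Borel set `B` with
`T⁻¹B = B` satisfies `μ(B) ∈ {0,1}`. -/
def IsErgodicMeasure {X : Type*} [MetricSpace X] [MeasurableSpace X]
    (T : X → X) (μ : ProbabilityMeasure X) : Prop :=
  IsInvariantMeasure T μ ∧
    ∀ B : Set X, MeasurableSet B → T ⁻¹' B = B → μ B = 0 ∨ μ B = 1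

section LogarithmicAverages

open Finset

lemma H_pos {n : ℕ} (hn : n ≠ 0) : 0 < H n :=
  sum_pos (fun _ _ => by positivity) (nonempty_range_iff.2 hn)

lemma tendsto_H_atTop : Tendsto H atTop atTop :=
  Real.tendsto_sum_range_one_div_nat_succ_atTop

noncomputable def cesaroMean (a : ℕ → ℝ) (n : ℕ) : ℝ :=
  (n : ℝ)⁻¹ * ∑ k ∈ range n, a k

noncomputable def logAverage (a : ℕ → ℝ) (n : ℕ) : ℝ :=
  (1 / H n) * ∑ k ∈ range n, (1 / (k + 1 : ℝ)) * a k

theorem Filter.Tendsto.weighted_cesaro {w b : ℕ → ℝ} {L : ℝ} (hb : Tendsto b atTop (𝓝 L))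
    (hw : 0 ≤ w) (hW : Tendsto (fun n => ∑ k ∈ range n, w k) atTop atTop) :
    Tendsto (fun n => (∑ k ∈ range n, w k * b k) / ∑ k ∈ range n, w k) atTop (𝓝 L) := by
  have hsmall : (fun k => w k * (b k - L)) =o[atTop] w := by
    simpa using (Asymptotics.isBigO_refl w atTop).mul_isLittleO
      ((Asymptotics.isLittleO_one_iff ℝ).2 (tendsto_sub_nhds_zero_iff.2 hb))
  have hdev := (hsmall.sum_range hw hW).tendsto_div_nhds_zero
  rw [← zero_add L]
  refine (hdev.add_const L).congr' ?_
  filter_upwards [hW.eventually_gt_atTop 0] with n hn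
  simp only [mul_sub, sum_sub_distrib, ← sum_mul]
  field_simp
  ring

lemma sum_div_succ_eq_cesaroMean_add (a : ℕ → ℝ) (n : ℕ) :
    ∑ k ∈ range n, (1 / (k + 1 : ℝ)) * a k
      = cesaroMean a n + ∑ k ∈ range n, (1 / (k + 1 : ℝ)) * cesaroMean a k := by
  induction n with
  | zero => simp [cesaroMean]
  | succ n ih =>
    rw [sum_range_succ, ih, sum_range_succ]
    rcases eq_or_ne n 0 with rfl | hn
    · simp [cesaroMean]
    · simp only [cesaroMean, sum_range_succ]
      field_simp
      push_cast
      ring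

theorem tendsto_logAverage_of_tendsto_cesaroMean {a : ℕ → ℝ} {L : ℝ}
    (h : Tendsto (cesaroMean a) atTop (𝓝 L)) : Tendsto (logAverage a) atTop (𝓝 L) := by
  have hweighted := h.weighted_cesaro (w := fun k => 1 / (k + 1 : ℝ))
    (fun k => by positivity) tendsto_H_atTop
  have hfirst : Tendsto (fun n => cesaroMean a n / H n) atTop (𝓝 0) :=
    h.div_atTop tendsto_H_atTop
  rw [← zero_add L]
  refine (hfirst.add hweighted).congr fun n => ?_
  rw [logAverage, sum_div_succ_eq_cesaroMean_add a n, H]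
  ring

lemma abs_logAverage_le {a : ℕ → ℝ} {C : ℝ} (ha : ∀ k, |a k| ≤ C) (n : ℕ) :
    |logAverage a n| ≤ C := by
  rcases eq_or_ne n 0 with rfl | hn
  · simpa [logAverage] using (abs_nonneg _).trans (ha 0)
  have hH := H_pos hn
  have hsum : |∑ k ∈ range n, (1 / (k + 1 : ℝ)) * a k| ≤ H n * C := by
    rw [H, sum_mul]
    refine (abs_sum_le_sum_abs _ _).trans (sum_le_sum fun k _ => ?_)
    rw [abs_mul, abs_of_pos (by positivity)]
    exact mul_le_mul_of_nonneg_left (ha k) (by positivity)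
  rwa [logAverage, abs_mul, abs_of_pos (by positivity), one_div, inv_mul_le_iff₀ hH]

lemma logAverage_sub (a b : ℕ → ℝ) (n : ℕ) :
    logAverage (fun k => a k - b k) n = logAverage a n - logAverage b n := by
  simp only [logAverage, mul_sub, sum_sub_distrib]

end LogarithmicAverages

section Limsup

variable {ι : Type*} {l : Filter ι} {u v : ι → ℝ} {C : ℝ}

lemma isBoundedUnder_le_of_norm_le (hu : ∀ i, ‖u i‖ ≤ C) : IsBoundedUnder (· ≤ ·) l u :=
  isBoundedUnder_of ⟨C, fun i => (abs_le.1 (hu i)).2⟩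

lemma isBoundedUnder_ge_of_norm_le (hu : ∀ i, ‖u i‖ ≤ C) : IsBoundedUnder (· ≥ ·) l u :=
  isBoundedUnder_of ⟨-C, fun i => (abs_le.1 (hu i)).1⟩

lemma limsup_le_limsup_of_tendsto_sub [l.NeBot] (hv : ∀ i, ‖v i‖ ≤ C)
    (h : Tendsto (u - v) l (𝓝 0)) : limsup u l ≤ limsup v l :=
  calc limsup u l = limsup (v + (u - v)) l := by rw [add_sub_cancel]
    _ ≤ limsup v l + limsup (u - v) l :=
        limsup_add_le (isBoundedUnder_ge_of_norm_le hv) (isBoundedUnder_le_of_norm_le hv)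
          h.isBoundedUnder_ge.isCoboundedUnder_le h.isBoundedUnder_le
    _ = limsup v l := by rw [h.limsup_eq, add_zero]

lemma limsup_eq_limsup_of_tendsto_sub [l.NeBot] (hu : ∀ i, ‖u i‖ ≤ C) (hv : ∀ i, ‖v i‖ ≤ C)
    (h : Tendsto (u - v) l (𝓝 0)) : limsup u l = limsup v l := by
  refine le_antisymm (limsup_le_limsup_of_tendsto_sub hv h)
    (limsup_le_limsup_of_tendsto_sub hu ?_)
  exact (by simpa using h.neg : Tendsto (fun i => v i - u i) l (𝓝 0))

end Limsup

section BirkhoffSum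

variable {α : Type*} {f : α → α} {g : α → ℝ}

lemma norm_birkhoffAverage_le {C : ℝ} (hgC : ∀ x, ‖g x‖ ≤ C) (n : ℕ) (x : α) :
    ‖birkhoffAverage ℝ f g n x‖ ≤ C := by
  rcases eq_or_ne n 0 with rfl | hn
  · simpa using (norm_nonneg _).trans (hgC x)
  have hsum : ‖birkhoffSum f g n x‖ ≤ n * C :=
    (norm_sum_le _ _).trans ((Finset.sum_le_sum fun k _ => hgC (f^[k] x)).trans (by simp))
  rw [birkhoffAverage, norm_smul, norm_inv, Real.norm_natCast]
  exact inv_mul_le_of_le_mul₀ (Nat.cast_nonneg n) (by linarith [norm_nonneg (g x), hgC x]) hsum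

noncomputable def maxBirkhoffSum (f : α → α) (g : α → ℝ) (N : ℕ) : α → ℝ :=
  partialSups (fun m => birkhoffSum f g (m + 1)) N

lemma maxBirkhoffSum_le_add (N : ℕ) (x : α) :
    maxBirkhoffSum f g N x ≤ g x + max (maxBirkhoffSum f g N (f x)) 0 := by
  simp only [maxBirkhoffSum, Pi.partialSups_apply]
  refine partialSups_le _ _ _ fun m hm => ?_
  rw [birkhoffSum_succ']
  gcongr
  rcases m with _ | j
  · simp
  · exact le_max_of_le_left
      (le_partialSups_of_le (fun m => birkhoffSum f g (m + 1) (f x)) (by omega))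

lemma birkhoffSum_indicator {s : Set α} (hs : f ⁻¹' s = s) (n : ℕ) (x : α) :
    birkhoffSum f (s.indicator g) n x = s.indicator (birkhoffSum f g n) x := by
  have hmem : ∀ k, f^[k] x ∈ s ↔ x ∈ s := fun k => by
    rw [← Set.mem_preimage, Function.IsFixedPt.preimage_iterate hs k]
  by_cases hx : x ∈ s <;> simp [birkhoffSum, hmem, hx]

lemma birkhoffSum_sub_const (b : ℝ) (n : ℕ) (x : α) :
    birkhoffSum f (fun y => g y - b) n x = birkhoffSum f g n x - n * b := by
  simp [birkhoffSum, Finset.sum_sub_distrib]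

variable (f g) in
noncomputable def birkhoffLimsup (x : α) : ℝ :=
  limsup (fun n => birkhoffAverage ℝ f g n x) atTop

lemma birkhoffLimsup_apply {C : ℝ} (hgC : ∀ x, ‖g x‖ ≤ C) (x : α) :
    birkhoffLimsup f g (f x) = birkhoffLimsup f g x :=
  limsup_eq_limsup_of_tendsto_sub (norm_birkhoffAverage_le hgC · _)
    (norm_birkhoffAverage_le hgC · _) <| tendsto_birkhoffAverage_apply_sub_birkhoffAverage' ℝ
      (isBounded_iff_forall_norm_le.2 ⟨C, Set.forall_mem_range.2 hgC⟩) f x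

lemma frequently_lt_birkhoffAverage {C : ℝ} (hgC : ∀ x, ‖g x‖ ≤ C) {x : α} {b : ℝ}
    (hb : b < birkhoffLimsup f g x) : ∃ᶠ n in atTop, b < birkhoffAverage ℝ f g n x :=
  frequently_lt_of_lt_limsup
    (isBoundedUnder_ge_of_norm_le (norm_birkhoffAverage_le hgC · x)).isCoboundedUnder_le hb

end BirkhoffSum

section MeasurePreserving

variable {α : Type*} [MeasurableSpace α] {μ : Measure α} {f : α → α} {g : α → ℝ}

lemma MeasureTheory.MeasurePreserving.integral_comp_of_aestronglyMeasurable {β : Type*}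
    [MeasurableSpace β] {ν : Measure β} {φ : α → β} (hφ : MeasurePreserving φ μ ν) {h : β → ℝ}
    (hh : AEStronglyMeasurable h ν) : ∫ x, h (φ x) ∂μ = ∫ y, h y ∂ν := by
  rw [← integral_map hφ.aemeasurable (hφ.map_eq ▸ hh), hφ.map_eq]

lemma measurable_birkhoffSum (hf : Measurable f) (hg : Measurable g) (n : ℕ) :
    Measurable (birkhoffSum f g n) :=
  Finset.measurable_sum _ fun k _ => hg.comp (hf.iterate k)

lemma measurable_birkhoffAverage (hf : Measurable f) (hg : Measurable g) (n : ℕ) :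
    Measurable (birkhoffAverage ℝ f g n) :=
  (measurable_birkhoffSum hf hg n).const_mul _

lemma integrable_comp_iterate (hf : MeasurePreserving f μ μ) (hg : Integrable g μ) (k : ℕ) :
    Integrable (fun x => g (f^[k] x)) μ :=
  ((hf.iterate k).integrable_comp hg.aestronglyMeasurable).2 hg

lemma integrable_birkhoffSum (hf : MeasurePreserving f μ μ) (hg : Integrable g μ) (n : ℕ) :
    Integrable (birkhoffSum f g n) μ :=
  integrable_finsetSum _ fun k _ => integrable_comp_iterate hf hg k

lemma integral_birkhoffSum (hf : MeasurePreserving f μ μ) (hg : Integrable g μ) (n : ℕ) :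
    ∫ x, birkhoffSum f g n x ∂μ = n * ∫ x, g x ∂μ := by
  have hcomp : ∀ k, ∫ x, g (f^[k] x) ∂μ = ∫ x, g x ∂μ := fun k =>
    (hf.iterate k).integral_comp_of_aestronglyMeasurable hg.aestronglyMeasurable
  simp only [birkhoffSum]
  rw [integral_finsetSum _ fun k _ => integrable_comp_iterate hf hg k]
  simp [hcomp]

lemma integral_birkhoffAverage (hf : MeasurePreserving f μ μ) (hg : Integrable g μ) {n : ℕ}
    (hn : n ≠ 0) : ∫ x, birkhoffAverage ℝ f g n x ∂μ = ∫ x, g x ∂μ := by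
  simp only [birkhoffAverage, smul_eq_mul]
  rw [integral_const_mul, integral_birkhoffSum hf hg, inv_mul_cancel_left₀ (by exact_mod_cast hn)]

lemma measurable_maxBirkhoffSum (hf : Measurable f) (hg : Measurable g) (N : ℕ) :
    Measurable (maxBirkhoffSum f g N) := by
  rw [maxBirkhoffSum, partialSups_eq_sup'_range]
  exact Finset.measurable_range_sup' fun k _ => measurable_birkhoffSum hf hg _

lemma integrable_maxBirkhoffSum (hf : MeasurePreserving f μ μ) (hg : Integrable g μ) (N : ℕ) :
    Integrable (maxBirkhoffSum f g N) μ := by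
  rw [maxBirkhoffSum, partialSups_eq_sup'_range]
  exact Finset.sup'_induction (p := fun φ => Integrable φ μ) _ _ (fun _ h₁ _ h₂ => h₁.sup h₂)
    fun k _ => integrable_birkhoffSum hf hg _

lemma setIntegral_pos_maxBirkhoffSum_nonneg (hf : MeasurePreserving f μ μ) (hgm : Measurable g)
    (hg : Integrable g μ) (N : ℕ) : 0 ≤ ∫ x in {x | 0 < maxBirkhoffSum f g N x}, g x ∂μ := by
  set M := maxBirkhoffSum f g N
  set E := {x | 0 < M x}
  set P : α → ℝ := fun x => max (M x) 0
  have hM : Integrable M μ := integrable_maxBirkhoffSum hf hg N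
  have hP : Integrable P μ := hM.sup (integrable_zero α ℝ μ)
  have hPf : Integrable (fun x => P (f x)) μ := (hf.integrable_comp hP.aestronglyMeasurable).2 hP
  have hE : MeasurableSet E :=
    measurableSet_lt measurable_const (measurable_maxBirkhoffSum hf.measurable hgm N)
  -- Garsia's argument: on `E`, `M = P ≤ g + P ∘ f`, while `∫ P ∘ f = ∫ P` and `P = 0` off `E`
  calc 0 = ∫ x, P x ∂μ - ∫ x, P (f x) ∂μ := by
        rw [hf.integral_comp_of_aestronglyMeasurable hP.aestronglyMeasurable, sub_self]
    _ ≤ ∫ x in E, P x ∂μ - ∫ x in E, P (f x) ∂μ := by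
        gcongr ?_ - ?_
        · refine (setIntegral_eq_integral_of_forall_compl_eq_zero fun x hx => ?_).ge
          exact max_eq_right (not_lt.1 hx)
        · exact setIntegral_le_integral hPf (ae_of_all _ fun x => le_max_right _ _)
    _ = ∫ x in E, (M x - P (f x)) ∂μ := by
        rw [integral_sub hM.integrableOn hPf.integrableOn]
        congr 1
        exact setIntegral_congr_fun hE fun x hx => max_eq_left (le_of_lt hx)
    _ ≤ ∫ x in E, g x ∂μ :=
        setIntegral_mono_on (hM.integrableOn.sub hPf.integrableOn) hg.integrableOn hE
          fun x _ => by linarith [maxBirkhoffSum_le_add (f := f) (g := g) N x]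

theorem MeasureTheory.MeasurePreserving.setIntegral_exists_birkhoffSum_pos_nonneg
    (hf : MeasurePreserving f μ μ) (hgm : Measurable g) (hg : Integrable g μ) :
    0 ≤ ∫ x in {x | ∃ n, 0 < birkhoffSum f g (n + 1) x}, g x ∂μ := by
  have hunion : ⋃ N, {x | 0 < maxBirkhoffSum f g N x}
      = {x | ∃ n, 0 < birkhoffSum f g (n + 1) x} := by
    ext x
    simp only [Set.mem_iUnion, Set.mem_ofPred_eq, maxBirkhoffSum, Pi.partialSups_apply]
    constructor
    · rintro ⟨N, hN⟩
      obtain ⟨m, -, hm⟩ := exists_partialSups_eq (fun m => birkhoffSum f g (m + 1) x) N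
      exact ⟨m, hm ▸ hN⟩
    · rintro ⟨n, hn⟩
      exact ⟨n, hn.trans_le (le_partialSups_of_le (fun m => birkhoffSum f g (m + 1) x) le_rfl)⟩
  have hmono : Monotone fun N => {x | 0 < maxBirkhoffSum f g N x} :=
    fun N N' h x hx => hx.trans_le <|
      Pi.le_def.1 (partialSups_monotone (fun m => birkhoffSum f g (m + 1)) h) x
  rw [← hunion]
  exact ge_of_tendsto' (tendsto_setIntegral_of_monotone
    (fun N => measurableSet_lt measurable_const (measurable_maxBirkhoffSum hf.measurable hgm N))
    hmono (hunion ▸ hg.integrableOn)) (setIntegral_pos_maxBirkhoffSum_nonneg hf hgm hg)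

theorem MeasureTheory.MeasurePreserving.mul_measureReal_le_setIntegral [IsFiniteMeasure μ]
    (hf : MeasurePreserving f μ μ) (hgm : Measurable g) (hg : Integrable g μ) {s : Set α}
    (hsm : MeasurableSet s) (hs : f ⁻¹' s = s) {b : ℝ}
    (hb : ∀ x ∈ s, ∃ᶠ n in atTop, b < birkhoffAverage ℝ f g n x) :
    b * μ.real s ≤ ∫ x in s, g x ∂μ := by
  -- the maximal ergodic theorem for `(g - b) 1_s`, whose set of positive partial sums is `s`
  set φ := s.indicator fun x => g x - b
  have hφ : Integrable φ μ := (hg.sub (integrable_const b)).indicator hsm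
  have hmax := hf.setIntegral_exists_birkhoffSum_pos_nonneg (g := φ)
    ((hgm.sub measurable_const).indicator hsm) hφ
  have hset : {x | ∃ n, 0 < birkhoffSum f φ (n + 1) x} = s := by
    ext x
    simp only [Set.mem_ofPred_eq, φ, birkhoffSum_indicator hs]
    by_cases hx : x ∈ s
    · simp only [Set.indicator_of_mem hx, hx, iff_true, birkhoffSum_sub_const]
      obtain ⟨n, hbn, hn⟩ := ((hb x hx).and_eventually (eventually_ge_atTop 1)).exists
      obtain ⟨m, rfl⟩ := Nat.exists_eq_add_of_le' hn
      refine ⟨m, ?_⟩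
      rw [birkhoffAverage, smul_eq_mul, lt_inv_mul_iff₀ (by positivity)] at hbn
      linarith
    · simp [hx]
  rw [hset, setIntegral_congr_fun hsm fun x hx => Set.indicator_of_mem hx _,
    integral_sub hg.integrableOn (integrable_const b), setIntegral_const, smul_eq_mul] at hmax
  linarith

lemma measurable_birkhoffLimsup (hf : Measurable f) (hg : Measurable g) :
    Measurable (birkhoffLimsup f g) :=
  Measurable.limsup fun n => measurable_birkhoffAverage hf hg n

-- `-birkhoffLimsup f (-g)` is the liminf of the averages of `g`, so this is the set where they
-- oscillate across `[a, b]`.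
lemma MeasureTheory.MeasurePreserving.measure_birkhoffLimsup_oscillation_eq_zero
    [IsFiniteMeasure μ] (hf : MeasurePreserving f μ μ) (hgm : Measurable g) {C : ℝ}
    (hgC : ∀ x, ‖g x‖ ≤ C) {a b : ℝ} (hab : a < b) :
    μ {x | b < birkhoffLimsup f g x ∧ -a < birkhoffLimsup f (-g) x} = 0 := by
  have hg : Integrable g μ := Integrable.of_bound hgm.aestronglyMeasurable C (ae_of_all _ hgC)
  have hnegC : ∀ x, ‖(-g) x‖ ≤ C := by simpa using hgC
  set E := {x | b < birkhoffLimsup f g x ∧ -a < birkhoffLimsup f (-g) x}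
  have hEm : MeasurableSet E :=
    (measurableSet_lt measurable_const (measurable_birkhoffLimsup hf.measurable hgm)).inter
      (measurableSet_lt measurable_const (measurable_birkhoffLimsup hf.measurable hgm.neg))
  have hEinv : f ⁻¹' E = E := by
    ext x
    simp [E, birkhoffLimsup_apply hgC, birkhoffLimsup_apply hnegC]
  have hupper := hf.mul_measureReal_le_setIntegral hgm hg hEm hEinv
    fun x hx => frequently_lt_birkhoffAverage hgC hx.1
  have hlower := hf.mul_measureReal_le_setIntegral hgm.neg hg.neg hEm hEinv
    fun x hx => frequently_lt_birkhoffAverage hnegC hx.2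
  simp only [Pi.neg_apply, integral_neg] at hlower
  have : μ.real E ≤ 0 := by nlinarith
  exact (measureReal_eq_zero_iff).1 (le_antisymm this measureReal_nonneg)

theorem MeasureTheory.MeasurePreserving.ae_tendsto_birkhoffAverage [IsFiniteMeasure μ]
    (hf : MeasurePreserving f μ μ) (hgm : Measurable g) {C : ℝ} (hgC : ∀ x, ‖g x‖ ≤ C) :
    ∀ᵐ x ∂μ, Tendsto (birkhoffAverage ℝ f g · x) atTop (𝓝 (birkhoffLimsup f g x)) := by
  have hgood : ∀ᵐ x ∂μ, ∀ a b : ℚ, (a : ℝ) < b →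
      ¬((b : ℝ) < birkhoffLimsup f g x ∧ -(a : ℝ) < birkhoffLimsup f (-g) x) := by
    simp only [ae_all_iff]
    intro a b hab
    exact measure_eq_zero_iff_ae_notMem.1
      (hf.measure_birkhoffLimsup_oscillation_eq_zero hgm hgC hab)
  filter_upwards [hgood] with x hx
  have hle : IsBoundedUnder (· ≤ ·) atTop (birkhoffAverage ℝ f g · x) :=
    isBoundedUnder_le_of_norm_le (norm_birkhoffAverage_le hgC · x)
  have hge : IsBoundedUnder (· ≥ ·) atTop (birkhoffAverage ℝ f g · x) :=
    isBoundedUnder_ge_of_norm_le (norm_birkhoffAverage_le hgC · x)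
  have hno_upcrossing : ∀ a ∈ Set.range ((↑) : ℚ → ℝ), ∀ b ∈ Set.range ((↑) : ℚ → ℝ), a < b →
      ¬((∃ᶠ n in atTop, birkhoffAverage ℝ f g n x < a) ∧
        ∃ᶠ n in atTop, b < birkhoffAverage ℝ f g n x) := by
    rintro _ ⟨a, rfl⟩ _ ⟨b, rfl⟩ hab ⟨hbelow, habove⟩
    obtain ⟨a', haa', ha'b⟩ := exists_rat_btwn hab
    obtain ⟨b', ha'b', hb'b⟩ := exists_rat_btwn ha'b
    refine hx a' b' ha'b' ⟨hb'b.trans_le ?_, (neg_lt_neg haa').trans_le ?_⟩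
    · exact le_limsup_of_frequently_le (habove.mono fun n hn => hn.le) hle
    · refine le_limsup_of_frequently_le (hbelow.mono fun n hn => ?_)
        (isBoundedUnder_le_of_norm_le (norm_birkhoffAverage_le (g := -g) (by simpa using hgC) · x))
      simpa [birkhoffAverage_neg] using hn.le
  obtain ⟨c, hc⟩ := tendsto_of_no_upcrossings Rat.denseRange_cast hno_upcrossing hle hge
  rwa [birkhoffLimsup, hc.limsup_eq]

theorem MeasureTheory.MeasurePreserving.integral_birkhoffLimsup [IsFiniteMeasure μ]
    (hf : MeasurePreserving f μ μ) (hgm : Measurable g) {C : ℝ} (hgC : ∀ x, ‖g x‖ ≤ C) :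
    ∫ x, birkhoffLimsup f g x ∂μ = ∫ x, g x ∂μ := by
  have hg : Integrable g μ := Integrable.of_bound hgm.aestronglyMeasurable C (ae_of_all _ hgC)
  have hlim := tendsto_integral_of_dominated_convergence (fun _ => C)
    (fun n => (measurable_birkhoffAverage hf.measurable hgm n).aestronglyMeasurable)
    (integrable_const C) (fun n => ae_of_all _ (norm_birkhoffAverage_le hgC n))
    (hf.ae_tendsto_birkhoffAverage hgm hgC)
  refine tendsto_nhds_unique hlim (tendsto_const_nhds.congr' ?_)
  filter_upwards [eventually_ne_atTop 0] with n hn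
  exact (integral_birkhoffAverage hf hg hn).symm

theorem Ergodic.birkhoffLimsup_ae_eq [IsProbabilityMeasure μ] (hf : Ergodic f μ)
    (hgm : Measurable g) {C : ℝ} (hgC : ∀ x, ‖g x‖ ≤ C) :
    birkhoffLimsup f g =ᵐ[μ] fun _ => ∫ x, g x ∂μ := by
  obtain ⟨c, hc⟩ := hf.toPreErgodic.ae_eq_const_of_ae_eq_comp
    (measurable_birkhoffLimsup hf.measurable hgm) (funext (birkhoffLimsup_apply hgC))
  have hint : ∫ x, birkhoffLimsup f g x ∂μ = c := by simp [integral_congr_ae hc]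
  rw [hf.toMeasurePreserving.integral_birkhoffLimsup hgm hgC] at hint
  rwa [hint]

end MeasurePreserving

open scoped BoundedContinuousFunction

section TopologicalDynamics

variable {X : Type*} [TopologicalSpace X] [MeasurableSpace X] [BorelSpace X] {T : X → X}

theorem MeasureTheory.MeasurePreserving.ergodic_of_ae_birkhoffLimsup_eq [HasOuterApproxClosed X]
    {μ : Measure X} [IsProbabilityMeasure μ] (hT : MeasurePreserving T μ μ)
    (h : ∀ φ : X →ᵇ ℝ, birkhoffLimsup T φ =ᵐ[μ] fun _ => ∫ x, φ x ∂μ) : Ergodic T μ := by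
  refine ⟨hT, ⟨fun s hsm hs => ?_⟩⟩
  have hrestrict : MeasurePreserving T (μ.restrict s) (μ.restrict s) := by
    simpa only [hs] using hT.restrict_preimage hsm
  have hμs : μ.restrict s = (μ s).toNNReal • μ := by
    refine ext_of_forall_integral_eq_of_IsFiniteMeasure fun φ => ?_
    calc ∫ x, φ x ∂μ.restrict s = ∫ x, birkhoffLimsup T φ x ∂μ.restrict s :=
          (hrestrict.integral_birkhoffLimsup φ.continuous.measurable φ.norm_coe_le_norm).symm
      _ = ∫ _, (∫ y, φ y ∂μ) ∂μ.restrict s := integral_congr_ae (ae_restrict_of_ae (h φ))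
      _ = ∫ x, φ x ∂((μ s).toNNReal • μ) := by
          simp [integral_smul_nnreal_measure, measureReal_def, NNReal.smul_def,
            ENNReal.coe_toNNReal_eq_toReal]
  have hmul : μ s * μ sᶜ = 0 := by
    have := congrArg (· sᶜ) hμs
    simp only [Measure.restrict_apply hsm.compl, Set.compl_inter_self, measure_empty,
      Measure.smul_apply, ENNReal.smul_def, smul_eq_mul,
      ENNReal.coe_toNNReal (measure_ne_top μ s)] at this
    exact this.symm
  rw [eventuallyConst_set', ae_eq_empty, ae_eq_univ]
  exact mul_eq_zero.1 hmul

end TopologicalDynamics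

section ContinuousFunctionals

variable {X : Type*} [TopologicalSpace X] [CompactSpace X]

lemma lipschitzWith_logAverage_orbit (T : X → X) (x : X) (n : ℕ) :
    LipschitzWith 1 fun φ : C(X, ℝ) => logAverage (fun k => φ (T^[k] x)) n :=
  LipschitzWith.of_dist_le_mul fun φ ψ => by
    rw [NNReal.coe_one, one_mul, Real.dist_eq, ← logAverage_sub]
    exact abs_logAverage_le (fun k => by
      rw [← Real.dist_eq]; exact ContinuousMap.dist_apply_le_dist (T^[k] x)) n

lemma lipschitzWith_integral_continuousMap [MeasurableSpace X] [OpensMeasurableSpace X]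
    (μ : Measure X) [IsProbabilityMeasure μ] :
    LipschitzWith 1 fun φ : C(X, ℝ) => ∫ x, φ x ∂μ :=
  LipschitzWith.of_dist_le_mul fun φ ψ => by
    have hint (φ : C(X, ℝ)) : Integrable φ μ :=
      Integrable.of_bound φ.continuous.aestronglyMeasurable ‖φ‖ (ae_of_all _ φ.norm_coe_le_norm)
    rw [NNReal.coe_one, one_mul, dist_eq_norm, ← integral_sub (hint φ) (hint ψ)]
    simpa using norm_integral_le_of_norm_le_const (μ := μ)
      (ae_of_all _ fun x => (dist_eq_norm (φ x) (ψ x)).symm.trans_le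
        (ContinuousMap.dist_apply_le_dist x))

end ContinuousFunctionals

section Metric

variable {X : Type*} [MetricSpace X] [MeasurableSpace X] {T : X → X}

lemma IsInvariantMeasure.measurePreserving {μ : ProbabilityMeasure X}
    (hμ : IsInvariantMeasure T μ) (hT : Measurable T) : MeasurePreserving T μ μ := by
  refine ⟨hT, Measure.ext fun B hB => ?_⟩
  rw [Measure.map_apply hT hB, ← ProbabilityMeasure.ennreal_coeFn_eq_coeFn_toMeasure,
    ← ProbabilityMeasure.ennreal_coeFn_eq_coeFn_toMeasure, hμ B hB]

lemma isErgodicMeasure_iff_ergodic {μ : ProbabilityMeasure X} (hμ : IsInvariantMeasure T μ)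
    (hT : Measurable T) : IsErgodicMeasure T μ ↔ Ergodic T μ := by
  refine ⟨fun h => ⟨hμ.measurePreserving hT, ⟨fun s hsm hs => ?_⟩⟩,
    fun h => ⟨hμ, fun B hB hBinv => ?_⟩⟩
  · rw [eventuallyConst_set', ae_eq_empty, ae_eq_univ, prob_compl_eq_zero_iff hsm,
      ← ProbabilityMeasure.ennreal_coeFn_eq_coeFn_toMeasure]
    exact_mod_cast h.2 s hsm hs
  · have := h.prob_eq_zero_or_one hB hBinv
    rw [← ProbabilityMeasure.ennreal_coeFn_eq_coeFn_toMeasure] at this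
    exact_mod_cast this

variable [BorelSpace X]

lemma ProbabilityMeasure.ext_of_forall_integral_continuousMap_eq {ν ν' : ProbabilityMeasure X}
    (h : ∀ φ : C(X, ℝ), ∫ x, φ x ∂(ν : Measure X) = ∫ x, φ x ∂(ν' : Measure X)) : ν = ν' :=
  ProbabilityMeasure.toMeasure_injective <|
    ext_of_forall_integral_eq_of_IsFiniteMeasure fun φ => h φ.toContinuousMap

lemma VTlog_eq_singleton_of_tendsto {μ : ProbabilityMeasure X} {x : X}
    (h : ∀ φ : C(X, ℝ), Tendsto (logAverage fun k => φ (T^[k] x)) atTop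
      (𝓝 (∫ y, φ y ∂(μ : Measure X)))) :
    VTlog T x = {μ} := by
  refine Set.eq_singleton_iff_unique_mem.2 ⟨⟨id, strictMono_id, h⟩, ?_⟩
  rintro ν ⟨n, hn, hν⟩
  exact ProbabilityMeasure.ext_of_forall_integral_continuousMap_eq fun φ =>
    tendsto_nhds_unique (hν φ) ((h φ).comp hn.tendsto_atTop)

theorem Ergodic.ae_tendsto_logAverage [CompactSpace X] {μ : Measure X} [IsProbabilityMeasure μ]
    (herg : Ergodic T μ) :
    ∀ᵐ x ∂μ, ∀ φ : C(X, ℝ),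
      Tendsto (logAverage fun k => φ (T^[k] x)) atTop (𝓝 (∫ y, φ y ∂μ)) := by
  obtain ⟨u, hu⟩ := TopologicalSpace.exists_dense_seq C(X, ℝ)
  have hseq : ∀ᵐ x ∂μ, ∀ i,
      Tendsto (logAverage fun k => u i (T^[k] x)) atTop (𝓝 (∫ y, u i y ∂μ)) := by
    refine ae_all_iff.2 fun i => ?_
    have hm := (u i).continuous.measurable
    filter_upwards [herg.toMeasurePreserving.ae_tendsto_birkhoffAverage hm (u i).norm_coe_le_norm,
      herg.birkhoffLimsup_ae_eq hm (u i).norm_coe_le_norm] with x hx hlim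
    exact tendsto_logAverage_of_tendsto_cesaroMean (hlim ▸ hx)
  filter_upwards [hseq] with x hx φ
  have hequi := (LipschitzWith.uniformEquicontinuous _ 1
    (lipschitzWith_logAverage_orbit T x)).equicontinuous
  exact hu.induction_on φ (hequi.isClosed_setOfPred_tendsto
    (lipschitzWith_integral_continuousMap μ).continuous) hx

end Metric

theorem ergodic_iff_ae_VTlog_singleton_general
    {X : Type*} [MetricSpace X] [CompactSpace X]
    [MeasurableSpace X] [BorelSpace X]
    (T : X → X) (hT : Continuous T)
    (μ : ProbabilityMeasure X) (hμ : IsInvariantMeasure T μ) :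
    IsErgodicMeasure T μ ↔ ∀ᵐ x ∂(μ : Measure X), VTlog T x = {μ} := by
  have hμT := hμ.measurePreserving hT.measurable
  rw [isErgodicMeasure_iff_ergodic hμ hT.measurable]
  refine ⟨fun herg => ?_, fun hae => hμT.ergodic_of_ae_birkhoffLimsup_eq fun φ => ?_⟩
  · filter_upwards [herg.ae_tendsto_logAverage] with x hx
    exact VTlog_eq_singleton_of_tendsto hx
  · filter_upwards [hμT.ae_tendsto_birkhoffAverage φ.continuous.measurable φ.norm_coe_le_norm,
      hae] with x hx hV
    obtain ⟨n, hn, hconv⟩ : μ ∈ VTlog T x := hV ▸ rfl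
    exact tendsto_nhds_unique
      ((tendsto_logAverage_of_tendsto_cesaroMean hx).comp hn.tendsto_atTop)
      (hconv φ.toContinuousMap)

/-- A `T`-invariant measure `μ` is ergodic if and only if `V^log_T(x) = {μ}` for
`μ`-almost every `x ∈ X`. -/
theorem ergodic_iff_ae_VTlog_singleton
    {X : Type*} [MetricSpace X] [CompactSpace X] [Nonempty X]
    [MeasurableSpace X] [BorelSpace X]
    (T : X → X) (hT : Continuous T)
    (μ : ProbabilityMeasure X) (hμ : IsInvariantMeasure T μ) :
    IsErgodicMeasure T μ ↔ ∀ᵐ x ∂(μ : Measure X), VTlog T x = {μ} :=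
  ergodic_iff_ae_VTlog_singleton_general T hT μ hμ
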